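/- Sandqvist's result for the minimal system: For every atomic formula p, the minimal system validates ¬¬p→p, i.e., for every set S of atomic rules containing no assumption-discharging rules there is a closed S-valid argument for ((p→⊥)→⊥)→p, where acceptable extensions are the supersets of S consisting of such rules. -/

import Mathlib

/-!
Common framework for proof-theoretic validity (Prawitz / Piecha–Schroeder-Heister style).

* Propositional formulas over countably many atoms (`ℕ`), with `⊥`, `∧`, `∨`, `→`;
  `¬A` abbreviates `A → ⊥`.
* Higher-level atomic rules: a rule has a finite list of premises, each premise being
  a pair of (a finite list of lower-level rules that may be discharged, an atomic
  conclusion), together with an atomic conclusion.  An atomic axiom `p̄` is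
  `HLRule.mk [] p`; an assumption of an atom is identified with its axiom rule.
* `AtDeriv S p`: the atom `p` is derivable using only rules of `S`
  (discharged rules become available).
* `Deriv S Γ φ`: natural deduction NJ augmented with the atomic rules in `S`,
  from hypotheses `Γ`.  `⊢_IPC` is `Deriv ∅ ∅`.
* `Valid 𝔖 S φ` formalizes "there is a closed `S`-valid argument for `φ`" relative to
  the proof-theoretic system `𝔖` (acceptable extensions of `S` are the supersets of `S`
  belonging to `𝔖`).  Unfolding the inductive definition of `S`-validity of arguments
  (atomic case, closed introduction case, closed non-introduction case, open case)
  clause-by-clause on the conclusion yields exactly the following recursion on formulas: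
  a closed valid argument for `A ∧ B` reduces (via the non-introduction case) to one
  ending in `∧`-introduction, i.e. closed valid arguments for `A` and `B`; similarly for
  `∨`; a closed valid argument for `A → B` reduces to one ending in `→`-introduction,
  whose immediate subargument is an open argument of `B` from the assumption `A`, which
  by the open case is valid iff every acceptable extension `S' ∈ 𝔖` of `S` having a
  closed `S'`-valid argument for `A` has one for `B`; a closed valid argument for an
  atom `p` exists iff `p` is `S`-derivable; and for `⊥` (which has no introduction rule,
  and is governed by the rules `⊥/p` for every atom `p`) iff every atom is `S`-derivable.
-/

/-- Propositional formulas over atoms `ℕ`. -/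
inductive PropForm : Type
  | atom : ℕ → PropForm
  | falsum : PropForm
  | conj : PropForm → PropForm → PropForm
  | disj : PropForm → PropForm → PropForm
  | impl : PropForm → PropForm → PropForm
  deriving DecidableEq

/-- `¬A` abbreviates `A → ⊥`. -/
def PropForm.neg (A : PropForm) : PropForm := .impl A .falsum

/-- Higher-level atomic rules. -/
inductive HLRule : Type
  | mk : List (List HLRule × ℕ) → ℕ → HLRule

/-- `AtDeriv S p`: the atom `p` is derivable using only the atomic rules in `S`;
applying a rule requires deriving each premise with its discharged rules made available. -/
inductive AtDeriv : Set HLRule → ℕ → Prop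
  | app (S : Set HLRule) (prems : List (List HLRule × ℕ)) (concl : ℕ)
      (hmem : HLRule.mk prems concl ∈ S)
      (hprem : ∀ pr ∈ prems, AtDeriv (S ∪ {R | R ∈ pr.1}) pr.2) :
      AtDeriv S concl

/-- Natural deduction NJ for intuitionistic propositional logic, augmented with the
atomic rules in `S`, with hypotheses `Γ`.  `Deriv ∅ Γ φ` is `Γ ⊢_IPC φ`. -/
inductive Deriv : Set HLRule → Set PropForm → PropForm → Prop
  | hyp {S : Set HLRule} {Γ : Set PropForm} {A : PropForm} :
      A ∈ Γ → Deriv S Γ A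
  | falsumE {S : Set HLRule} {Γ : Set PropForm} {A : PropForm} :
      Deriv S Γ .falsum → Deriv S Γ A
  | andI {S : Set HLRule} {Γ : Set PropForm} {A B : PropForm} :
      Deriv S Γ A → Deriv S Γ B → Deriv S Γ (.conj A B)
  | andE1 {S : Set HLRule} {Γ : Set PropForm} {A B : PropForm} :
      Deriv S Γ (.conj A B) → Deriv S Γ A
  | andE2 {S : Set HLRule} {Γ : Set PropForm} {A B : PropForm} :
      Deriv S Γ (.conj A B) → Deriv S Γ B
  | orI1 {S : Set HLRule} {Γ : Set PropForm} {A B : PropForm} :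
      Deriv S Γ A → Deriv S Γ (.disj A B)
  | orI2 {S : Set HLRule} {Γ : Set PropForm} {A B : PropForm} :
      Deriv S Γ B → Deriv S Γ (.disj A B)
  | orE {S : Set HLRule} {Γ : Set PropForm} {A B C : PropForm} :
      Deriv S Γ (.disj A B) → Deriv S (insert A Γ) C → Deriv S (insert B Γ) C →
      Deriv S Γ C
  | implI {S : Set HLRule} {Γ : Set PropForm} {A B : PropForm} :
      Deriv S (insert A Γ) B → Deriv S Γ (.impl A B)
  | implE {S : Set HLRule} {Γ : Set PropForm} {A B : PropForm} :
      Deriv S Γ (.impl A B) → Deriv S Γ A → Deriv S Γ B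
  | rule {S : Set HLRule} {Γ : Set PropForm}
      (prems : List (List HLRule × ℕ)) (concl : ℕ) :
      HLRule.mk prems concl ∈ S →
      (∀ pr ∈ prems, Deriv (S ∪ {R | R ∈ pr.1}) Γ (.atom pr.2)) →
      Deriv S Γ (.atom concl)

/-- `⊢_IPC φ` : derivability of `φ` in intuitionistic propositional natural deduction. -/
def IPC (φ : PropForm) : Prop := Deriv ∅ ∅ φ

/-- Auxiliary form of validity, by recursion on the formula. -/
def ValidAux (𝔖 : Set (Set HLRule)) : PropForm → Set HLRule → Prop
  | .atom p, S => AtDeriv S p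
  | .falsum, S => ∀ a : ℕ, AtDeriv S a
  | .conj A B, S => ValidAux 𝔖 A S ∧ ValidAux 𝔖 B S
  | .disj A B, S => ValidAux 𝔖 A S ∨ ValidAux 𝔖 B S
  | .impl A B, S => ∀ S' ∈ 𝔖, S ⊆ S' → ValidAux 𝔖 A S' → ValidAux 𝔖 B S'

/-- `Valid 𝔖 S φ`: relative to the proof-theoretic system `𝔖` (in which the acceptable
extensions of `S` are exactly the supersets of `S` belonging to `𝔖`), there is a closed
`S`-valid argument for `φ`. -/
def Valid (𝔖 : Set (Set HLRule)) (S : Set HLRule) (φ : PropForm) : Prop :=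
  ValidAux 𝔖 φ S

/-- `𝔖 ⊨ φ`: for every `S ∈ 𝔖` there is a closed `S`-valid argument for `φ`
(acceptable extensions taken in `𝔖`). -/
def Models (𝔖 : Set (Set HLRule)) (φ : PropForm) : Prop :=
  ∀ S ∈ 𝔖, Valid 𝔖 S φ

/-- The complete proof-theoretic system: all sets of atomic rules of all levels. -/
def completeSystem : Set (Set HLRule) := Set.univ

/-- `S`-validity of the open one-premise/one-assumption argument from `A` to `B`
(relative to `𝔖`): by the open case, for every acceptable extension `S' ∈ 𝔖` of `S`,
substituting any closed `S'`-valid argument for the assumption `A` yields an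
`S'`-valid closed argument, which (the final step not being an introduction rule)
amounts to the existence of a closed `S'`-valid argument for `B`. -/
def OpenArgValid1 (𝔖 : Set (Set HLRule)) (S : Set HLRule) (A B : PropForm) : Prop :=
  ∀ S' ∈ 𝔖, S ⊆ S' → Valid 𝔖 S' A → Valid 𝔖 S' B

/-- A first-level atomic rule: one that discharges nothing, i.e. an atomic axiom or a
rule from atomic premises to an atomic conclusion. -/
def FirstLevel : HLRule → Prop
  | .mk prems _ => ∀ pr ∈ prems, pr.1 = []

/-- The minimal proof-theoretic system: its members are exactly the sets of atomic
rules that discharge nothing; acceptable extensions of such an `S` are its supersets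
in the minimal system. -/
def minimalSystem : Set (Set HLRule) := {S | ∀ R ∈ S, FirstLevel R}

/-!
Given an acceptable extension `S'` of `S` at which `¬¬p` is valid, add to `S'` the
first-level rules `p / a` for every atom `a`. In the resulting system `T` every extension
deriving `p` derives every atom, so `¬p` is valid at `T`; hence `⊥` is valid at `T`, and in
particular `p` is `T`-derivable. Each added rule has the single premise `p` and `S'`
discharges nothing, so if `p` were not `S'`-derivable, induction on derivations shows that
`T` derives no atom beyond those of `S'`, in particular not `p`.
-/

def explosionRules (p : ℕ) : Set HLRule := {R | ∃ a : ℕ, R = HLRule.mk [([], p)] a}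

lemma firstLevel_of_mem_explosionRules {p : ℕ} {R : HLRule} (hR : R ∈ explosionRules p) :
    FirstLevel R := by
  obtain ⟨a, rfl⟩ := hR
  simp [FirstLevel]

lemma union_explosionRules_mem_minimalSystem {S : Set HLRule} (hS : S ∈ minimalSystem)
    (p : ℕ) : S ∪ explosionRules p ∈ minimalSystem := by
  rintro R (hR | hR)
  · exact hS R hR
  · exact firstLevel_of_mem_explosionRules hR

lemma valid_neg_atom_of_explosionRules_subset {𝔖 : Set (Set HLRule)} {T : Set HLRule}
    {p : ℕ} (hT : explosionRules p ⊆ T) : Valid 𝔖 T (PropForm.neg (.atom p)) := by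
  intro T' _ hTT' hp a
  refine AtDeriv.app T' [([], p)] a (hTT' (hT ⟨a, rfl⟩)) ?_
  simpa [ValidAux] using hp

lemma atDeriv_of_subset_union_explosionRules {S T : Set HLRule} {p q : ℕ}
    (hS : S ∈ minimalSystem) (hp : ¬ AtDeriv S p) (hq : AtDeriv T q)
    (hT : T ⊆ S ∪ explosionRules p) : AtDeriv S q := by
  induction hq with
  | app T prems concl hmem _ ih =>
    rcases hT hmem with hmemS | ⟨a, hrule⟩
    · refine AtDeriv.app S prems concl hmemS fun pr hpr => ?_
      have hpr_nil : pr.1 = [] := hS _ hmemS pr hpr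
      simpa [hpr_nil] using ih pr hpr (by simpa [hpr_nil] using hT)
    · obtain ⟨rfl, rfl⟩ := HLRule.mk.inj hrule
      exact absurd (ih ([], p) (List.mem_singleton_self _) (by simpa using hT)) hp

theorem sandqvist_minimal_dne_general (p : ℕ) (S : Set HLRule) :
    Valid minimalSystem S
      (.impl (PropForm.neg (PropForm.neg (.atom p))) (.atom p)) := by
  intro S' hS' _ hnn
  by_contra hp
  have hbot : Valid minimalSystem (S' ∪ explosionRules p) .falsum :=
    hnn _ (union_explosionRules_mem_minimalSystem hS' p) Set.subset_union_left
      (valid_neg_atom_of_explosionRules_subset Set.subset_union_right)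
  exact hp (atDeriv_of_subset_union_explosionRules hS' hp (hbot p) le_rfl)

/-- **Sandqvist's result for the minimal system.**  For every atom `p` and every set
`S` of atomic rules containing no assumption-discharging rules, there is a closed
`S`-valid argument (relative to the minimal system) for `¬¬p → p`, i.e. for
`((p → ⊥) → ⊥) → p`. -/
theorem sandqvist_minimal_dne (p : ℕ) (S : Set HLRule) (hS : S ∈ minimalSystem) :
    Valid minimalSystem S
      (.impl (PropForm.neg (PropForm.neg (.atom p))) (.atom p)) :=
  sandqvist_minimal_dne_general p S
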